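/- Let F be a family of functions from the positive integers to the nonnegative integers that is product-bounded: for any f_1,...,f_k ∈ F there exists f ∈ F with f_1(n)···f_k(n) ≤ f(n) for all n ≥ 1. Let g : ℕ → ℕ_0. Suppose that for every ideal X of 2-colorings (edge 2-colored complete graphs under discrete containment), either |X_n| ≤ f(n) for all n ≥ 1 for some f ∈ F, or |X_n| ≥ g(n) for all n ≥ 1. Then for any finite set P of colors, every ideal X of edge P-colored complete graphs (under discrete containment) satisfies the same dichotomy: either |X_n| ≤ f(n) for all n ≥ 1 for some f ∈ F, or |X_n| ≥ g(n) for all n ≥ 1. -/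

import Mathlib

/-- A (directed representation of an) edge: a pair of vertices `p` with `p.1 < p.2`. -/
abbrev Edge (n : ℕ) := {p : Fin n × Fin n // p.1 < p.2}

/-- An edge-`C`-colored complete graph: a number of vertices together with a coloring
of all edges by elements of `C`. -/
abbrev Coloring (C : Type) := (n : ℕ) × (Edge n → C)

/-- Build an edge from natural numbers `i < j < n`. -/
def mkE {n : ℕ} (i j : ℕ) (hij : i < j) (hj : j < n) : Edge n :=
  ⟨(⟨i, lt_trans hij hj⟩, ⟨j, hj⟩), Fin.mk_lt_mk.mpr hij⟩

/-- The image of an edge under a strictly increasing vertex map. -/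
def edgeMap {a b : ℕ} (f : Fin a → Fin b) (hf : StrictMono f) (e : Edge a) : Edge b :=
  ⟨(f e.1.1, f e.1.2), hf e.2⟩

/-- Containment of colorings: `K ⪯ L` via a strictly increasing vertex map that sends
the color of each edge to a `le`-larger color. -/
def ColLe {C : Type} (le : C → C → Prop) (K L : Coloring C) : Prop :=
  ∃ f : Fin K.1 → Fin L.1, ∃ hf : StrictMono f,
    ∀ e : Edge K.1, le (K.2 e) (L.2 (edgeMap f hf e))

/-- A lower ideal of colorings. -/
def IsIdeal {C : Type} (le : C → C → Prop) (X : Set (Coloring C)) : Prop :=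
  ∀ K L : Coloring C, ColLe le K L → L ∈ X → K ∈ X

/-!
Recolouring by a single colour `b` (edges of colour `b` ↦ `0`, all others ↦ `1`) maps an ideal
of `P`-colourings onto an ideal of 2-colourings, and a `P`-colouring is determined by its `|P|`
recolourings. Hence `|R_b(X)_n| ≤ |X_n| ≤ ∏_b |R_b(X)_n|`. If some `R_b(X)` has large slices, so
has `X`; otherwise every `R_b(X)` is bounded by a member of `F`, and product-boundedness bounds
`X` as well.
-/

def ProductBounded (F : Set (ℕ → ℕ)) : Prop :=
  ∀ (k : ℕ) (fs : Fin k → (ℕ → ℕ)), (∀ i, fs i ∈ F) →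
    ∃ f ∈ F, ∀ n : ℕ, 1 ≤ n → (∏ i, fs i n) ≤ f n

theorem ProductBounded.exists_prod_le {F : Set (ℕ → ℕ)} (hF : ProductBounded F)
    {ι : Type*} [Fintype ι] (fs : ι → ℕ → ℕ) (hfs : ∀ i, fs i ∈ F) :
    ∃ f ∈ F, ∀ n : ℕ, 1 ≤ n → (∏ i, fs i n) ≤ f n := by
  let e := Fintype.equivFin ι
  obtain ⟨f, hfF, hf⟩ := hF _ (fun i => fs (e.symm i)) (fun i => hfs _)
  refine ⟨f, hfF, fun n hn => ?_⟩
  rw [← e.symm.prod_comp (fun i => fs i n)]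
  exact hf n hn

section Slices

variable {C : Type}

abbrev slice (X : Set (Coloring C)) (n : ℕ) : Type := {K : Coloring C // K ∈ X ∧ K.1 = n}

instance finite_slice [Finite C] (X : Set (Coloring C)) (n : ℕ) : Finite (slice X n) := by
  refine Finite.of_injective
    (fun K => (fun e => K.1.2 (cast (congrArg Edge K.2.2.symm) e) : Edge n → C)) ?_
  rintro ⟨⟨m, c⟩, hm, rfl⟩ ⟨⟨m', c'⟩, hm', hm'm⟩ h
  obtain rfl : m' = m := hm'm
  simp only [Subtype.mk.injEq, Sigma.mk.injEq, heq_eq_eq, true_and]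
  exact h

def SlicesBoundedBy (F : Set (ℕ → ℕ)) (X : Set (Coloring C)) : Prop :=
  ∃ f ∈ F, ∀ n : ℕ, 1 ≤ n → Nat.card (slice X n) ≤ f n

def SlicesAtLeast (g : ℕ → ℕ) (X : Set (Coloring C)) : Prop :=
  ∀ n : ℕ, 1 ≤ n → g n ≤ Nat.card (slice X n)

end Slices

section Recolor

variable {P : Type} [DecidableEq P]

/-- The paper's `R_b`, with the colours `1, 2` encoded as `0, 1`. -/
def recolor (b : P) (K : Coloring P) : Coloring (Fin 2) :=
  ⟨K.1, fun e => if K.2 e = b then 0 else 1⟩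

theorem IsIdeal.image_recolor {X : Set (Coloring P)} (hX : IsIdeal (· = ·) X) (b : P) :
    IsIdeal (· = ·) (recolor b '' X) := by
  rintro ⟨n, c⟩ L ⟨f, hf, hcol⟩ ⟨M, hM, rfl⟩
  refine ⟨⟨n, fun e => M.2 (edgeMap f hf e)⟩, hX _ M ⟨f, hf, fun e => rfl⟩ hM, ?_⟩
  simp only [recolor, Sigma.mk.injEq, heq_eq_eq, true_and]
  exact funext fun e => (hcol e).symm

theorem eq_of_recolor_eq {K L : Coloring P} (hKL : K.1 = L.1)
    (h : ∀ b, recolor b K = recolor b L) : K = L := by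
  obtain ⟨m, c⟩ := K
  obtain ⟨m', c'⟩ := L
  obtain rfl : m = m' := hKL
  congr 1
  funext e
  have hcol := congrFun (eq_of_heq (Sigma.ext_iff.mp (h (c e))).2) e
  by_contra hne
  simp only [recolor, if_neg (Ne.symm hne)] at hcol
  exact absurd hcol (by decide)

def recolorSlice (X : Set (Coloring P)) (b : P) (n : ℕ) (K : slice X n) :
    slice (recolor b '' X) n :=
  ⟨recolor b K.1, ⟨K.1, K.2.1, rfl⟩, K.2.2⟩

theorem recolorSlice_surjective (X : Set (Coloring P)) (b : P) (n : ℕ) :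
    Function.Surjective (recolorSlice X b n) := by
  rintro ⟨_, ⟨M, hM, rfl⟩, hn⟩
  exact ⟨⟨M, hM, hn⟩, rfl⟩

theorem card_slice_image_recolor_le [Finite P] (X : Set (Coloring P)) (b : P) (n : ℕ) :
    Nat.card (slice (recolor b '' X) n) ≤ Nat.card (slice X n) :=
  Nat.card_le_card_of_surjective _ (recolorSlice_surjective X b n)

theorem card_slice_le_prod [Fintype P] (X : Set (Coloring P)) (n : ℕ) :
    Nat.card (slice X n) ≤ ∏ b, Nat.card (slice (recolor b '' X) n) := by
  rw [← Nat.card_pi]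
  refine Nat.card_le_card_of_injective (fun K b => recolorSlice X b n K) fun K L h => ?_
  exact Subtype.ext <| eq_of_recolor_eq (K.2.2.trans L.2.2.symm)
    fun b => congrArg Subtype.val (congrFun h b)

theorem SlicesAtLeast.of_image_recolor [Finite P] {g : ℕ → ℕ} {X : Set (Coloring P)} {b : P}
    (h : SlicesAtLeast g (recolor b '' X)) : SlicesAtLeast g X :=
  fun n hn => (h n hn).trans (card_slice_image_recolor_le X b n)

theorem SlicesBoundedBy.of_forall_image_recolor [Fintype P] {F : Set (ℕ → ℕ)}
    (hF : ProductBounded F) {X : Set (Coloring P)}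
    (h : ∀ b, SlicesBoundedBy F (recolor b '' X)) : SlicesBoundedBy F X := by
  choose fb hfbF hfb using h
  obtain ⟨f, hfF, hf⟩ := hF.exists_prod_le fb hfbF
  refine ⟨f, hfF, fun n hn => ?_⟩
  calc Nat.card (slice X n)
      ≤ ∏ b, Nat.card (slice (recolor b '' X) n) := card_slice_le_prod X n
    _ ≤ ∏ b, fb b n := Finset.prod_le_prod' fun b _ => hfb b n hn
    _ ≤ f n := hf n hn

end Recolor

theorem stmt_9 (F : Set (ℕ → ℕ))
    (hF : ∀ (k : ℕ) (fs : Fin k → (ℕ → ℕ)), (∀ i, fs i ∈ F) →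
      ∃ f ∈ F, ∀ n : ℕ, 1 ≤ n → (∏ i, fs i n) ≤ f n)
    (g : ℕ → ℕ)
    (h2 : ∀ X : Set (Coloring (Fin 2)), IsIdeal (· = ·) X →
      (∃ f ∈ F, ∀ n : ℕ, 1 ≤ n →
          Nat.card {K : Coloring (Fin 2) // K ∈ X ∧ K.1 = n} ≤ f n) ∨
      (∀ n : ℕ, 1 ≤ n →
          g n ≤ Nat.card {K : Coloring (Fin 2) // K ∈ X ∧ K.1 = n}))
    (P : Type) [Fintype P] [DecidableEq P]
    (X : Set (Coloring P)) (hX : IsIdeal (· = ·) X) :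
    (∃ f ∈ F, ∀ n : ℕ, 1 ≤ n →
        Nat.card {K : Coloring P // K ∈ X ∧ K.1 = n} ≤ f n) ∨
    (∀ n : ℕ, 1 ≤ n →
        g n ≤ Nat.card {K : Coloring P // K ∈ X ∧ K.1 = n}) := by
  by_cases hbounded : ∀ b : P, SlicesBoundedBy F (recolor b '' X)
  · exact Or.inl (SlicesBoundedBy.of_forall_image_recolor hF hbounded)
  · obtain ⟨b, hb⟩ := not_forall.mp hbounded
    have hlarge : SlicesAtLeast g (recolor b '' X) :=
      (h2 _ (hX.image_recolor b)).resolve_left hb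
    exact Or.inr hlarge.of_image_recolor
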